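/- arXiv:2412.10753 — 3 statements merged into one kernel-verified Lean document; each statement's English description precedes it below -/
import Mathlib

section
/- Let Σ and Σ₀ be p×p real symmetric positive definite matrices. Let λ₁ ≥ ⋯ ≥ λ_p > 0 be the eigenvalues of Σ and d₁ ≥ ⋯ ≥ d_p > 0 the eigenvalues of Σ₀, and assume min_{l=1,…,p−1} d_l/d_{l+1} > c for some constant c > 1. Then there exist positive constants δ and C depending only on c such that: if p‖Σ₀^{−1/2} Σ Σ₀^{−1/2} − I_p‖₂ < δ, then sup_{k=1,…,p} | λ_k/d_k − 1 | ≤ C p ‖Σ₀^{−1/2} Σ Σ₀^{−1/2} − I_p‖₂ and sup_{k=1,…,p} | √(λ_k)/√(d_k) − 1 | ≤ C p ‖Σ₀^{−1/2} Σ Σ₀^{−1/2} − I_p‖₂. -/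
/-!
Put `R = Σ₀^{-1/2}` and `ε = ‖R Σ R - I‖₂`. Substituting `x = R y` gives
`|xᵀ Σ x - xᵀ Σ₀ x| ≤ ε · xᵀ Σ₀ x`, i.e. `(1 - ε) Σ₀ ≤ Σ ≤ (1 + ε) Σ₀` as quadratic forms.
By the Courant–Fischer principle the `k`-th eigenvalue is monotone for this order, so
`(1 - ε) d_k ≤ λ_k ≤ (1 + ε) d_k` (Ostrowski). Hence `|λ_k / d_k - 1| ≤ ε ≤ p ε`, and the
square-root bound follows from `|√t - 1| ≤ |t - 1|`.
-/

open Matrix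

/-- Spectral norm (ℓ²-operator norm) of a real matrix. -/
noncomputable def sNorm {m n : Type*} [Fintype m] [Fintype n] [DecidableEq n]
    (A : Matrix m n ℝ) : ℝ :=
  ‖LinearMap.toContinuousLinearMap (Matrix.toEuclideanLin A)‖

/-- `eigval A k` is the `k`-th largest eigenvalue (0-based, counted with multiplicity)
of a hermitian (= real symmetric) matrix `A`. -/
noncomputable def eigval {p : ℕ} (A : Matrix (Fin p) (Fin p) ℝ) (k : Fin p) : ℝ :=
  if hA : A.IsHermitian then hA.eigenvalues (Tuple.sort hA.eigenvalues k.rev) else 0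

open Classical in
/-- The positive definite square root of `A⁻¹`, for `A` positive definite. -/
noncomputable def invSqrt {p : ℕ} (A : Matrix (Fin p) (Fin p) ℝ) : Matrix (Fin p) (Fin p) ℝ :=
  if hA : A.PosDef then
    hA.inv.posSemidef.1.eigenvectorUnitary.1 *
      diagonal ((↑) ∘ (√·) ∘ hA.inv.posSemidef.1.eigenvalues) *
      (star hA.inv.posSemidef.1.eigenvectorUnitary : Matrix (Fin p) (Fin p) ℝ)
  else 0

open Module WithLp

section QuadraticForm

variable {n : Type*} [Fintype n]

lemma norm_sq_eq_dotProduct_self (v : EuclideanSpace ℝ n) : ‖v‖ ^ 2 = ofLp v ⬝ᵥ ofLp v := by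
  rw [← real_inner_self_eq_norm_sq, EuclideanSpace.inner_eq_star_dotProduct, star_trivial]

variable [DecidableEq n]

lemma inner_toEuclideanLin_self_eq_dotProduct (A : Matrix n n ℝ) (v : EuclideanSpace ℝ n) :
    inner ℝ v (toEuclideanLin A v) = ofLp v ⬝ᵥ A *ᵥ ofLp v := by
  simp [EuclideanSpace.inner_eq_star_dotProduct, dotProduct_comm]

lemma abs_dotProduct_mulVec_self_le (M : Matrix n n ℝ) (x : n → ℝ) :
    |x ⬝ᵥ M *ᵥ x| ≤ sNorm M * (x ⬝ᵥ x) := by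
  set v : EuclideanSpace ℝ n := toLp 2 x
  rw [← ofLp_toLp 2 x, ← inner_toEuclideanLin_self_eq_dotProduct, ← norm_sq_eq_dotProduct_self]
  calc |inner ℝ v (toEuclideanLin M v)| ≤ ‖v‖ * ‖toEuclideanLin M v‖ := abs_real_inner_le_norm _ _
    _ ≤ ‖v‖ * (sNorm M * ‖v‖) := by
        gcongr; exact (LinearMap.toContinuousLinearMap (toEuclideanLin M)).le_opNorm v
    _ = sNorm M * ‖v‖ ^ 2 := by ring

lemma abs_dotProduct_mulVec_sub_le {A R S : Matrix n n ℝ} (hR : Rᵀ = R) (hRAR : R * A * R = 1)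
    (x : n → ℝ) :
    |x ⬝ᵥ S *ᵥ x - x ⬝ᵥ A *ᵥ x| ≤ sNorm (R * S * R - 1) * (x ⬝ᵥ A *ᵥ x) := by
  set y := (A * R) *ᵥ x
  have hx : x = R *ᵥ y := by simp only [y, mulVec_mulVec, ← Matrix.mul_assoc, hRAR, one_mulVec]
  have hconj : ∀ M : Matrix n n ℝ, x ⬝ᵥ M *ᵥ x = y ⬝ᵥ (R * M * R) *ᵥ y := fun M => by
    rw [hx, dotProduct_comm, dotProduct_mulVec, ← mulVec_transpose, hR, dotProduct_comm,
      mulVec_mulVec, mulVec_mulVec, Matrix.mul_assoc]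
  have hAy : x ⬝ᵥ A *ᵥ x = y ⬝ᵥ y := by rw [hconj, hRAR, one_mulVec]
  rw [hAy, hconj S]
  convert abs_dotProduct_mulVec_self_le (R * S * R - 1) y using 2
  rw [sub_mulVec, dotProduct_sub, one_mulVec]

end QuadraticForm

lemma OrthonormalBasis.inner_eq_zero_of_mem_span {ι E : Type*} [Fintype ι]
    [NormedAddCommGroup E] [InnerProductSpace ℝ E] (b : OrthonormalBasis ι ℝ E) {T : Finset ι}
    {v : E} (hv : v ∈ Submodule.span ℝ (Set.range fun j : T => b j)) {i : ι} (hi : i ∉ T) :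
    inner ℝ (b i) v = 0 := by
  refine Submodule.span_induction ?_ (by simp)
    (fun x y _ _ hx hy => by simp [inner_add_right, hx, hy])
    (fun a x _ hx => by simp [inner_smul_right, hx]) hv
  rintro _ ⟨j, rfl⟩
  exact b.orthonormal.2 fun h => hi (h ▸ j.2)

namespace Matrix.IsHermitian

variable {n : Type*} [Fintype n] [DecidableEq n] {A : Matrix n n ℝ}

lemma inner_toEuclideanLin_self_eq_sum (hA : A.IsHermitian) (v : EuclideanSpace ℝ n) :
    inner ℝ v (toEuclideanLin A v) =
      ∑ i, hA.eigenvalues i * inner ℝ (hA.eigenvectorBasis i) v ^ 2 := by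
  set b := hA.eigenvectorBasis
  have hAv : toEuclideanLin A v = ∑ i, (hA.eigenvalues i * inner ℝ (b i) v) • b i := by
    conv_lhs => rw [← b.sum_repr' v, map_sum]
    refine Finset.sum_congr rfl fun i _ => ?_
    have hi : toEuclideanLin A (b i) = hA.eigenvalues i • b i := by
      ext j; exact congrFun (hA.mulVec_eigenvectorBasis i) j
    rw [map_smul, hi, smul_smul, mul_comm]
  rw [hAv, inner_sum]
  refine Finset.sum_congr rfl fun i _ => ?_
  rw [real_inner_smul_right, real_inner_comm]
  ring

abbrev eigenvectorSpan (hA : A.IsHermitian) (T : Finset n) : Submodule ℝ (EuclideanSpace ℝ n) :=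
  Submodule.span ℝ (Set.range fun j : T => hA.eigenvectorBasis j)

lemma finrank_eigenvectorSpan (hA : A.IsHermitian) (T : Finset n) :
    finrank ℝ (hA.eigenvectorSpan T) = T.card := by
  rw [finrank_span_eq_card, Fintype.card_coe]
  exact (hA.eigenvectorBasis.orthonormal.comp _ Subtype.val_injective).linearIndependent

lemma mul_norm_sq_le_inner_of_mem_eigenvectorSpan (hA : A.IsHermitian) {T : Finset n} {m : ℝ}
    (hm : ∀ i ∈ T, m ≤ hA.eigenvalues i) {v : EuclideanSpace ℝ n}
    (hv : v ∈ hA.eigenvectorSpan T) :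
    m * ‖v‖ ^ 2 ≤ inner ℝ v (toEuclideanLin A v) := by
  rw [hA.inner_toEuclideanLin_self_eq_sum, ← hA.eigenvectorBasis.sum_sq_inner_right,
    Finset.mul_sum]
  refine Finset.sum_le_sum fun i _ => ?_
  by_cases hi : i ∈ T
  · exact mul_le_mul_of_nonneg_right (hm i hi) (sq_nonneg _)
  · simp [hA.eigenvectorBasis.inner_eq_zero_of_mem_span hv hi]

lemma inner_le_mul_norm_sq_of_mem_eigenvectorSpan (hA : A.IsHermitian) {T : Finset n} {m : ℝ}
    (hm : ∀ i ∈ T, hA.eigenvalues i ≤ m) {v : EuclideanSpace ℝ n}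
    (hv : v ∈ hA.eigenvectorSpan T) :
    inner ℝ v (toEuclideanLin A v) ≤ m * ‖v‖ ^ 2 := by
  rw [hA.inner_toEuclideanLin_self_eq_sum, ← hA.eigenvectorBasis.sum_sq_inner_right,
    Finset.mul_sum]
  refine Finset.sum_le_sum fun i _ => ?_
  by_cases hi : i ∈ T
  · exact mul_le_mul_of_nonneg_right (hm i hi) (sq_nonneg _)
  · simp [hA.eigenvectorBasis.inner_eq_zero_of_mem_span hv hi]

end Matrix.IsHermitian

section Eigval

variable {p : ℕ} {A B : Matrix (Fin p) (Fin p) ℝ}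

lemma eigval_eq (hA : A.IsHermitian) (k : Fin p) :
    eigval A k = hA.eigenvalues (Tuple.sort hA.eigenvalues k.rev) := by
  rw [eigval, dif_pos hA]

lemma eigval_pos (hA : A.PosDef) (k : Fin p) : 0 < eigval A k := by
  rw [eigval_eq hA.1]
  exact hA.eigenvalues_pos _

/-- Courant–Fischer: the span of the top `k + 1` eigenvectors of `A` meets the span of the
bottom `p - k` eigenvectors of `B`. -/
lemma exists_ne_zero_eigval_mul_le_inner_and_inner_le (hA : A.IsHermitian) (hB : B.IsHermitian)
    (k : Fin p) :
    ∃ v : EuclideanSpace ℝ (Fin p), v ≠ 0 ∧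
      eigval A k * ‖v‖ ^ 2 ≤ inner ℝ v (toEuclideanLin A v) ∧
      inner ℝ v (toEuclideanLin B v) ≤ eigval B k * ‖v‖ ^ 2 := by
  set σ := Tuple.sort hA.eigenvalues
  set τ := Tuple.sort hB.eigenvalues
  set V := hA.eigenvectorSpan ((Finset.Ici k.rev).image σ)
  set W := hB.eigenvectorSpan ((Finset.Iic k.rev).image τ)
  obtain ⟨v, hvV, hvW, hv0⟩ : ∃ v ∈ V, v ∈ W ∧ v ≠ 0 := by
    by_contra! h
    have hdim := Submodule.finrank_add_finrank_le_of_disjoint (Submodule.disjoint_def.2 h)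
    rw [hA.finrank_eigenvectorSpan, hB.finrank_eigenvectorSpan,
      Finset.card_image_of_injective _ σ.injective, Finset.card_image_of_injective _ τ.injective,
      Fin.card_Ici, Fin.card_Iic, finrank_euclideanSpace_fin, Fin.val_rev] at hdim
    omega
  refine ⟨v, hv0, hA.mul_norm_sq_le_inner_of_mem_eigenvectorSpan ?_ hvV,
    hB.inner_le_mul_norm_sq_of_mem_eigenvectorSpan ?_ hvW⟩
  · simp only [Finset.mem_image, Finset.mem_Ici, forall_exists_index, and_imp,
      forall_apply_eq_imp_iff₂, eigval_eq hA]
    exact fun j hj => Tuple.monotone_sort hA.eigenvalues hj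
  · simp only [Finset.mem_image, Finset.mem_Iic, forall_exists_index, and_imp,
      forall_apply_eq_imp_iff₂, eigval_eq hB]
    exact fun j hj => Tuple.monotone_sort hB.eigenvalues hj

lemma eigval_le_mul_eigval_of_dotProduct_le (hA : A.IsHermitian) (hB : B.IsHermitian)
    {t : ℝ} (ht : 0 ≤ t) (h : ∀ x, x ⬝ᵥ A *ᵥ x ≤ t * (x ⬝ᵥ B *ᵥ x)) (k : Fin p) :
    eigval A k ≤ t * eigval B k := by
  obtain ⟨v, hv0, hAv, hBv⟩ := exists_ne_zero_eigval_mul_le_inner_and_inner_le hA hB k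
  have hAB := h (ofLp v)
  rw [← inner_toEuclideanLin_self_eq_dotProduct, ← inner_toEuclideanLin_self_eq_dotProduct] at hAB
  refine le_of_mul_le_mul_right ?_ (by positivity : 0 < ‖v‖ ^ 2)
  calc eigval A k * ‖v‖ ^ 2 ≤ t * inner ℝ v (toEuclideanLin B v) := hAv.trans hAB
    _ ≤ t * (eigval B k * ‖v‖ ^ 2) := by gcongr
    _ = t * eigval B k * ‖v‖ ^ 2 := by ring

lemma mul_eigval_le_eigval_of_mul_dotProduct_le (hA : A.IsHermitian) (hB : B.IsHermitian)
    {t : ℝ} (ht : 0 ≤ t) (h : ∀ x, t * (x ⬝ᵥ B *ᵥ x) ≤ x ⬝ᵥ A *ᵥ x) (k : Fin p) :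
    t * eigval B k ≤ eigval A k := by
  obtain ⟨v, hv0, hBv, hAv⟩ := exists_ne_zero_eigval_mul_le_inner_and_inner_le hB hA k
  have hAB := h (ofLp v)
  rw [← inner_toEuclideanLin_self_eq_dotProduct, ← inner_toEuclideanLin_self_eq_dotProduct] at hAB
  refine le_of_mul_le_mul_right ?_ (by positivity : 0 < ‖v‖ ^ 2)
  calc t * eigval B k * ‖v‖ ^ 2 = t * (eigval B k * ‖v‖ ^ 2) := by ring
    _ ≤ t * inner ℝ v (toEuclideanLin B v) := by gcongr
    _ ≤ eigval A k * ‖v‖ ^ 2 := hAB.trans hAv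

end Eigval

section InvSqrt

variable {p : ℕ} {A : Matrix (Fin p) (Fin p) ℝ}

lemma invSqrt_transpose (hA : A.PosDef) : (invSqrt A)ᵀ = invSqrt A := by
  simp [invSqrt, dif_pos hA, transpose_mul, star_eq_conjTranspose,
    conjTranspose_eq_transpose_of_trivial, Matrix.mul_assoc]

lemma invSqrt_mul_invSqrt (hA : A.PosDef) : invSqrt A * invSqrt A = A⁻¹ := by
  have hinv := hA.inv.posSemidef.1
  set U := hinv.eigenvectorUnitary.1
  set D := diagonal ((↑) ∘ (√·) ∘ hinv.eigenvalues : Fin p → ℝ)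
  have hUU : star U * U = 1 := Unitary.coe_star_mul_self _
  have hDD : D * D = diagonal ((↑) ∘ hinv.eigenvalues) := by
    simp only [D, diagonal_mul_diagonal]
    congr 1; funext i
    simp [Real.mul_self_sqrt (hA.inv.posSemidef.eigenvalues_nonneg i)]
  have hspec := hinv.spectral_theorem
  rw [Unitary.conjStarAlgAut_apply] at hspec
  rw [invSqrt, dif_pos hA]
  refine Eq.trans ?_ hspec.symm
  calc U * D * star U * (U * D * star U) = U * D * (star U * U) * D * star U := by
        simp only [Matrix.mul_assoc]
    _ = _ := by rw [hUU, Matrix.mul_one, Matrix.mul_assoc U, hDD]; rfl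

lemma invSqrt_mul_mul_invSqrt (hA : A.PosDef) : invSqrt A * A * invSqrt A = 1 := by
  rw [Matrix.mul_assoc, mul_eq_one_comm, Matrix.mul_assoc, invSqrt_mul_invSqrt hA,
    mul_nonsing_inv _ (isUnit_iff_ne_zero.2 hA.det_pos.ne')]

end InvSqrt

theorem abs_eigval_div_eigval_sub_one_le {p : ℕ} {S S₀ : Matrix (Fin p) (Fin p) ℝ}
    (hS : S.PosDef) (hS₀ : S₀.PosDef) (k : Fin p) :
    |eigval S k / eigval S₀ k - 1| ≤ sNorm (invSqrt S₀ * S * invSqrt S₀ - 1) := by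
  set ε := sNorm (invSqrt S₀ * S * invSqrt S₀ - 1)
  have hε : 0 ≤ ε := norm_nonneg _
  have hquad x := abs_le.1 <|
    abs_dotProduct_mulVec_sub_le (S := S) (invSqrt_transpose hS₀) (invSqrt_mul_mul_invSqrt hS₀) x
  have hd := eigval_pos hS₀ k
  have upper : eigval S k ≤ (1 + ε) * eigval S₀ k :=
    eigval_le_mul_eigval_of_dotProduct_le hS.1 hS₀.1 (by positivity)
      (fun x => by linarith [(hquad x).2]) k
  have lower : (1 - ε) * eigval S₀ k ≤ eigval S k := by
    rcases le_total ε 1 with hε1 | hε1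
    · exact mul_eigval_le_eigval_of_mul_dotProduct_le hS.1 hS₀.1 (sub_nonneg.2 hε1)
        (fun x => by linarith [(hquad x).1]) k
    · nlinarith [eigval_pos hS k]
  rw [abs_le, le_sub_iff_add_le, sub_le_iff_le_add, le_div_iff₀ hd, div_le_iff₀ hd]
  constructor <;> linarith

lemma abs_sqrt_sub_one_le_abs_sub_one {t : ℝ} (ht : 0 ≤ t) : |√t - 1| ≤ |t - 1| := by
  have hfactor : t - 1 = (√t - 1) * (√t + 1) := by
    linear_combination -Real.sq_sqrt ht
  rw [hfactor, abs_mul]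
  exact le_mul_of_one_le_right (abs_nonneg _)
    (by rw [abs_of_nonneg (by positivity)]; linarith [Real.sqrt_nonneg t])

/-- Appendix Theorem A.1 (low-dimensional eigenvalue perturbation). -/
theorem statement5 :
    ∀ c : ℝ, 1 < c →
      ∃ δ C : ℝ, 0 < δ ∧ 0 < C ∧
        ∀ (p : ℕ) (Sig Sig0 : Matrix (Fin p) (Fin p) ℝ),
          Sig.PosDef → Sig0.PosDef →
          (∀ l : ℕ, (h : l + 1 < p) →
            c < eigval Sig0 ⟨l, by omega⟩ / eigval Sig0 ⟨l + 1, h⟩) →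
          (p : ℝ) * sNorm (invSqrt Sig0 * Sig * invSqrt Sig0 - 1) < δ →
          (∀ k : Fin p,
            |eigval Sig k / eigval Sig0 k - 1| ≤
              C * p * sNorm (invSqrt Sig0 * Sig * invSqrt Sig0 - 1)) ∧
          (∀ k : Fin p,
            |Real.sqrt (eigval Sig k) / Real.sqrt (eigval Sig0 k) - 1| ≤
              C * p * sNorm (invSqrt Sig0 * Sig * invSqrt Sig0 - 1)) := by
  intro c _
  refine ⟨1, 1, one_pos, one_pos, fun p Sig Sig0 hSig hSig0 _ _ => ?_⟩
  have hp (k : Fin p) : sNorm (invSqrt Sig0 * Sig * invSqrt Sig0 - 1) ≤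
      1 * p * sNorm (invSqrt Sig0 * Sig * invSqrt Sig0 - 1) := by
    rw [one_mul]
    exact le_mul_of_one_le_left (norm_nonneg _) (by exact_mod_cast k.pos)
  have hratio k := (abs_eigval_div_eigval_sub_one_le hSig hSig0 k).trans (hp k)
  refine ⟨hratio, fun k => ?_⟩
  rw [← Real.sqrt_div (eigval_pos hSig k).le]
  exact (abs_sqrt_sub_one_le_abs_sub_one
    (div_nonneg (eigval_pos hSig k).le (eigval_pos hSig0 k).le)).trans (hratio k)
end

section
/- Let Σ be a p×p real symmetric positive definite matrix, K ≤ p, and let Γ ∈ ℝ^{p×K} and Γ⊥ ∈ ℝ^{p×(p−K)} be such that the p×p matrix [Γ, Γ⊥] is orthogonal. Then for every k = 1,…,K: | √(λ_k(Σ)) − √(λ_k(Γᵀ Σ Γ)) | ≤ ‖Γ⊥ᵀ Σ Γ⊥‖₂^{1/2}. -/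
open Matrix

/-!
Cauchy interlacing, via the Courant–Fischer characterisation, gives `λ_k(ΓᵀΣΓ) ≤ λ_k(Σ)`.
Conversely, the image under `Γ` of the span of the bottom `K - k` eigenvectors of `ΓᵀΣΓ`,
together with the range of `Γ⊥`, has dimension `p - k`, so it contains a vector
`x = Γw + Γ⊥z ≠ 0` with `λ_k(Σ) ‖x‖² ≤ ⟪x, Σx⟫`. As `x ↦ √⟪x, Σx⟫` is a seminorm and
`‖x‖² = ‖w‖² + ‖z‖²`,
`√λ_k(Σ) ‖x‖ ≤ √⟪w, ΓᵀΣΓ w⟫ + √⟪z, Γ⊥ᵀΣΓ⊥ z⟫ ≤ (√λ_k(ΓᵀΣΓ) + ‖Γ⊥ᵀΣΓ⊥‖^{1/2}) ‖x‖`.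
-/

open Module Submodule
open scoped RealInnerProductSpace

theorem Submodule.exists_mem_ne_zero_of_finrank_lt_add {K V : Type*} [DivisionRing K]
    [AddCommGroup V] [Module K V] [FiniteDimensional K V] {s t : Submodule K V}
    (h : finrank K V < finrank K s + finrank K t) : ∃ x ∈ s, x ∈ t ∧ x ≠ 0 := by
  by_contra! hst
  exact h.not_ge (finrank_add_finrank_le_of_disjoint (disjoint_def.2 hst))

namespace OrthonormalBasis

variable {ι E : Type*} [Fintype ι] [NormedAddCommGroup E] [InnerProductSpace ℝ E]
  (b : OrthonormalBasis ι ℝ E)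

theorem inner_eq_zero_of_mem_span_image {s : Set ι} {x : E} (hx : x ∈ span ℝ (b '' s))
    {j : ι} (hj : j ∉ s) : ⟪b j, x⟫ = 0 := by
  have hle : span ℝ (b '' s) ≤ (ℝ ∙ b j)ᗮ := span_le.2 <| by
    rintro _ ⟨i, hi, rfl⟩
    exact mem_orthogonal_singleton_iff_inner_right.2
      (b.orthonormal.2 (ne_of_mem_of_not_mem hi hj).symm)
  exact mem_orthogonal_singleton_iff_inner_right.1 (hle hx)

theorem finrank_span_image (s : Finset ι) : finrank ℝ (span ℝ (b '' s)) = s.card := by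
  rw [Set.image_eq_range]
  exact (finrank_span_eq_card
    (b.orthonormal.linearIndependent.comp _ Subtype.val_injective)).trans (by simp)

variable {T : E →ₗ[ℝ] E} {μ : ι → ℝ}

theorem inner_apply_self_eq_sum (hT : T.IsSymmetric) (hb : ∀ i, T (b i) = μ i • b i) (x : E) :
    ⟪x, T x⟫ = ∑ i, μ i * ⟪b i, x⟫ ^ 2 := by
  rw [← b.sum_inner_mul_inner x (T x)]
  refine Finset.sum_congr rfl fun i _ => ?_
  rw [← hT, hb, real_inner_smul_left, real_inner_comm x]
  ring

theorem inner_apply_self_le_of_mem_span (hT : T.IsSymmetric) (hb : ∀ i, T (b i) = μ i • b i)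
    {s : Set ι} {c : ℝ} (hc : ∀ i ∈ s, μ i ≤ c) {x : E} (hx : x ∈ span ℝ (b '' s)) :
    ⟪x, T x⟫ ≤ c * ‖x‖ ^ 2 := by
  rw [b.inner_apply_self_eq_sum hT hb, ← b.sum_sq_inner_right x, Finset.mul_sum]
  refine Finset.sum_le_sum fun i _ => ?_
  by_cases hi : i ∈ s
  · exact mul_le_mul_of_nonneg_right (hc i hi) (sq_nonneg _)
  · simp [b.inner_eq_zero_of_mem_span_image hx hi]

theorem le_inner_apply_self_of_mem_span (hT : T.IsSymmetric) (hb : ∀ i, T (b i) = μ i • b i)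
    {s : Set ι} {c : ℝ} (hc : ∀ i ∈ s, c ≤ μ i) {x : E} (hx : x ∈ span ℝ (b '' s)) :
    c * ‖x‖ ^ 2 ≤ ⟪x, T x⟫ := by
  rw [b.inner_apply_self_eq_sum hT hb, ← b.sum_sq_inner_right x, Finset.mul_sum]
  refine Finset.sum_le_sum fun i _ => ?_
  by_cases hi : i ∈ s
  · exact mul_le_mul_of_nonneg_right (hc i hi) (sq_nonneg _)
  · simp [b.inner_eq_zero_of_mem_span_image hx hi]

end OrthonormalBasis

theorem sqrt_mul_norm_sq {E : Type*} [SeminormedAddCommGroup E] (c : ℝ) (v : E) :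
    √(c * ‖v‖ ^ 2) = √c * ‖v‖ := by
  rw [Real.sqrt_mul' c (sq_nonneg _), Real.sqrt_sq (norm_nonneg v)]

namespace Matrix

section toEuclideanLin

variable {m n : Type*} [Fintype m] [Fintype n] [DecidableEq m] [DecidableEq n]

theorem toEuclideanLin_mul_apply {𝕜 l : Type*} [RCLike 𝕜] (A : Matrix l m 𝕜)
    (B : Matrix m n 𝕜) (x : EuclideanSpace 𝕜 n) :
    toEuclideanLin (A * B) x = toEuclideanLin A (toEuclideanLin B x) := by
  simp

theorem inner_toEuclideanLin_toEuclideanLin {l : Type*} [Fintype l] [DecidableEq l]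
    (A : Matrix l m ℝ) (B : Matrix l n ℝ) (x : EuclideanSpace ℝ m) (y : EuclideanSpace ℝ n) :
    ⟪toEuclideanLin A x, toEuclideanLin B y⟫ = ⟪x, toEuclideanLin (Aᵀ * B) y⟫ := by
  rw [← conjTranspose_eq_transpose_of_trivial, toEuclideanLin_mul_apply,
    toEuclideanLin_conjTranspose_eq_adjoint, LinearMap.adjoint_inner_right]

theorem inner_toEuclideanLin_transpose_mul_mul (A : Matrix m m ℝ) (G : Matrix m n ℝ)
    (x : EuclideanSpace ℝ n) :
    ⟪x, toEuclideanLin (Gᵀ * A * G) x⟫ =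
      ⟪toEuclideanLin G x, toEuclideanLin A (toEuclideanLin G x)⟫ := by
  rw [← toEuclideanLin_mul_apply, inner_toEuclideanLin_toEuclideanLin, Matrix.mul_assoc]

theorem inner_toEuclideanLin_self_le_sNorm_mul (A : Matrix n n ℝ) (x : EuclideanSpace ℝ n) :
    ⟪x, toEuclideanLin A x⟫ ≤ sNorm A * ‖x‖ ^ 2 :=
  calc ⟪x, toEuclideanLin A x⟫ ≤ ‖x‖ * ‖toEuclideanLin A x‖ := real_inner_le_norm _ _
    _ ≤ ‖x‖ * (sNorm A * ‖x‖) := mul_le_mul_of_nonneg_left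
        ((LinearMap.toContinuousLinearMap (toEuclideanLin A)).le_opNorm x) (norm_nonneg x)
    _ = sNorm A * ‖x‖ ^ 2 := by ring

theorem PosSemidef.exists_inner_toEuclideanLin_self_eq_norm_sq {A : Matrix n n ℝ}
    (hA : A.PosSemidef) :
    ∃ B : Matrix n n ℝ, ∀ x, ⟪x, toEuclideanLin A x⟫ = ‖toEuclideanLin B x‖ ^ 2 := by
  obtain ⟨B, rfl⟩ := by
    open MatrixOrder in exact CStarAlgebra.nonneg_iff_eq_star_mul_self.mp hA.nonneg
  refine ⟨B, fun x => ?_⟩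
  rw [← real_inner_self_eq_norm_sq, inner_toEuclideanLin_toEuclideanLin, star_eq_conjTranspose,
    conjTranspose_eq_transpose_of_trivial]

theorem PosSemidef.sqrt_inner_toEuclideanLin_add_le {A : Matrix n n ℝ} (hA : A.PosSemidef)
    (x y : EuclideanSpace ℝ n) :
    √⟪x + y, toEuclideanLin A (x + y)⟫ ≤
      √⟪x, toEuclideanLin A x⟫ + √⟪y, toEuclideanLin A y⟫ := by
  obtain ⟨B, hB⟩ := hA.exists_inner_toEuclideanLin_self_eq_norm_sq
  rw [hB, hB, hB, Real.sqrt_sq (norm_nonneg _), Real.sqrt_sq (norm_nonneg _),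
    Real.sqrt_sq (norm_nonneg _), map_add]
  exact norm_add_le _ _

theorem inner_toEuclideanLin_eq_zero_of_transpose_mul_eq_zero {l : Type*} [Fintype l]
    [DecidableEq l] {G : Matrix m n ℝ} {G' : Matrix m l ℝ} (hGG' : Gᵀ * G' = 0)
    (x : EuclideanSpace ℝ n) (y : EuclideanSpace ℝ l) :
    ⟪toEuclideanLin G x, toEuclideanLin G' y⟫ = 0 := by
  simp [inner_toEuclideanLin_toEuclideanLin, hGG']

variable {G : Matrix m n ℝ} (hG : Gᵀ * G = 1)
include hG

theorem norm_toEuclideanLin_of_transpose_mul_self_eq_one (x : EuclideanSpace ℝ n) :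
    ‖toEuclideanLin G x‖ = ‖x‖ := by
  rw [norm_eq_sqrt_real_inner, norm_eq_sqrt_real_inner, inner_toEuclideanLin_toEuclideanLin,
    hG]
  simp

theorem injective_toEuclideanLin_of_transpose_mul_self_eq_one :
    Function.Injective (toEuclideanLin G) :=
  (injective_iff_map_eq_zero _).2 fun x hx => by
    rwa [← norm_eq_zero, ← norm_toEuclideanLin_of_transpose_mul_self_eq_one hG, norm_eq_zero]

theorem finrank_map_toEuclideanLin_of_transpose_mul_self_eq_one
    (W : Submodule ℝ (EuclideanSpace ℝ n)) :
    finrank ℝ (W.map (toEuclideanLin G)) = finrank ℝ W :=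
  (equivMapOfInjective _ (injective_toEuclideanLin_of_transpose_mul_self_eq_one hG)
    W).finrank_eq.symm

theorem finrank_map_toEuclideanLin_sup_range {l : Type*} [Fintype l] [DecidableEq l]
    {G' : Matrix m l ℝ} (hG' : G'ᵀ * G' = 1) (hGG' : Gᵀ * G' = 0)
    (W : Submodule ℝ (EuclideanSpace ℝ n)) :
    finrank ℝ ↥(W.map (toEuclideanLin G) ⊔ LinearMap.range (toEuclideanLin G')) =
      finrank ℝ W + Fintype.card l := by
  have hdisj : Disjoint (W.map (toEuclideanLin G)) (LinearMap.range (toEuclideanLin G')) := by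
    refine disjoint_def.2 ?_
    rintro _ ⟨x, -, rfl⟩ ⟨y, hy⟩
    rw [← inner_self_eq_zero (𝕜 := ℝ)]
    nth_rw 2 [← hy]
    exact inner_toEuclideanLin_eq_zero_of_transpose_mul_eq_zero hGG' x y
  have hsum := finrank_sup_add_finrank_inf_eq (W.map (toEuclideanLin G))
    (LinearMap.range (toEuclideanLin G'))
  rwa [hdisj.eq_bot, finrank_bot, add_zero,
    finrank_map_toEuclideanLin_of_transpose_mul_self_eq_one hG,
    LinearMap.finrank_range_of_inj (injective_toEuclideanLin_of_transpose_mul_self_eq_one hG'),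
    finrank_euclideanSpace] at hsum

end toEuclideanLin

namespace IsHermitian

theorem transpose_mul_mul {m n : Type*} [Fintype m] {A : Matrix m m ℝ} (hA : A.IsHermitian)
    (G : Matrix m n ℝ) : (Gᵀ * A * G).IsHermitian := by
  simpa [conjTranspose_eq_transpose_of_trivial] using isHermitian_conjTranspose_mul_mul G hA

theorem toEuclideanLin_eigenvectorBasis {n : Type*} [Fintype n] [DecidableEq n]
    {A : Matrix n n ℝ} (hA : A.IsHermitian) (i : n) :
    toEuclideanLin A (hA.eigenvectorBasis i) = hA.eigenvalues i • hA.eigenvectorBasis i := by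
  apply WithLp.ofLp_injective
  simp [hA.mulVec_eigenvectorBasis]

variable {n : ℕ} {A : Matrix (Fin n) (Fin n) ℝ} (hA : A.IsHermitian)
include hA

theorem eigval_eq (k : Fin n) :
    eigval A k = hA.eigenvalues (Tuple.sort hA.eigenvalues k.rev) :=
  dif_pos hA

theorem exists_succ_le_finrank_forall_eigval_mul_le_inner (k : Fin n) :
    ∃ W : Submodule ℝ (EuclideanSpace ℝ (Fin n)), k + 1 ≤ finrank ℝ W ∧
      ∀ x ∈ W, eigval A k * ‖x‖ ^ 2 ≤ ⟪x, toEuclideanLin A x⟫ := by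
  set s := Finset.univ.filter fun i => eigval A k ≤ hA.eigenvalues i
  refine ⟨span ℝ (hA.eigenvectorBasis '' s), ?_, fun x hx => ?_⟩
  · rw [OrthonormalBasis.finrank_span_image]
    -- `Tuple.sort` orders the eigenvalues increasingly, so `eigval A k` sits at position `k.rev`.
    calc k + 1 = (Finset.Ici k.rev).card := by rw [Fin.card_Ici, Fin.val_rev]; omega
      _ ≤ s.card := Finset.card_le_card_of_injOn _ (fun j hj => by
          simpa [s, hA.eigval_eq] using
            Tuple.monotone_sort hA.eigenvalues (Finset.mem_Ici.1 hj))
        (Tuple.sort hA.eigenvalues).injective.injOn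
  · exact hA.eigenvectorBasis.le_inner_apply_self_of_mem_span
      (isSymmetric_toEuclideanLin_iff.2 hA) hA.toEuclideanLin_eigenvectorBasis
      (fun i hi => by simpa [s] using hi) hx

theorem exists_sub_le_finrank_forall_inner_le_eigval_mul (k : Fin n) :
    ∃ W : Submodule ℝ (EuclideanSpace ℝ (Fin n)), n - k ≤ finrank ℝ W ∧
      ∀ x ∈ W, ⟪x, toEuclideanLin A x⟫ ≤ eigval A k * ‖x‖ ^ 2 := by
  set s := Finset.univ.filter fun i => hA.eigenvalues i ≤ eigval A k
  refine ⟨span ℝ (hA.eigenvectorBasis '' s), ?_, fun x hx => ?_⟩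
  · rw [OrthonormalBasis.finrank_span_image]
    calc n - k = (Finset.Iic k.rev).card := by rw [Fin.card_Iic, Fin.val_rev]; omega
      _ ≤ s.card := Finset.card_le_card_of_injOn _ (fun j hj => by
          simpa [s, hA.eigval_eq] using
            Tuple.monotone_sort hA.eigenvalues (Finset.mem_Iic.1 hj))
        (Tuple.sort hA.eigenvalues).injective.injOn
  · exact hA.eigenvectorBasis.inner_apply_self_le_of_mem_span
      (isSymmetric_toEuclideanLin_iff.2 hA) hA.toEuclideanLin_eigenvectorBasis
      (fun i hi => by simpa [s] using hi) hx

theorem exists_mem_ne_zero_inner_le_eigval_mul (k : Fin n)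
    (V : Submodule ℝ (EuclideanSpace ℝ (Fin n))) (hV : k + 1 ≤ finrank ℝ V) :
    ∃ x ∈ V, x ≠ 0 ∧ ⟪x, toEuclideanLin A x⟫ ≤ eigval A k * ‖x‖ ^ 2 := by
  obtain ⟨W, hW, hWA⟩ := hA.exists_sub_le_finrank_forall_inner_le_eigval_mul k
  obtain ⟨x, hxV, hxW, hx0⟩ := exists_mem_ne_zero_of_finrank_lt_add (s := V) (t := W)
    (by rw [finrank_euclideanSpace_fin]; omega)
  exact ⟨x, hxV, hx0, hWA x hxW⟩

theorem exists_mem_ne_zero_eigval_mul_le_inner (k : Fin n)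
    (V : Submodule ℝ (EuclideanSpace ℝ (Fin n))) (hV : n - k ≤ finrank ℝ V) :
    ∃ x ∈ V, x ≠ 0 ∧ eigval A k * ‖x‖ ^ 2 ≤ ⟪x, toEuclideanLin A x⟫ := by
  obtain ⟨W, hW, hWA⟩ := hA.exists_succ_le_finrank_forall_eigval_mul_le_inner k
  obtain ⟨x, hxV, hxW, hx0⟩ := exists_mem_ne_zero_of_finrank_lt_add (s := V) (t := W)
    (by rw [finrank_euclideanSpace_fin]; omega)
  exact ⟨x, hxV, hx0, hWA x hxW⟩

end IsHermitian

variable {p K : ℕ} {A : Matrix (Fin p) (Fin p) ℝ} {G : Matrix (Fin p) (Fin K) ℝ}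

theorem IsHermitian.eigval_transpose_mul_mul_le (hA : A.IsHermitian) (hG : Gᵀ * G = 1)
    (hK : K ≤ p) (k : Fin K) : eigval (Gᵀ * A * G) k ≤ eigval A (Fin.castLE hK k) := by
  obtain ⟨W, hW, hWM⟩ :=
    (hA.transpose_mul_mul G).exists_succ_le_finrank_forall_eigval_mul_le_inner k
  obtain ⟨_, ⟨w, hw, rfl⟩, hw0, hwA⟩ := hA.exists_mem_ne_zero_inner_le_eigval_mul
    (Fin.castLE hK k) (W.map (toEuclideanLin G))
    (by rwa [finrank_map_toEuclideanLin_of_transpose_mul_self_eq_one hG])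
  rw [← inner_toEuclideanLin_transpose_mul_mul,
    norm_toEuclideanLin_of_transpose_mul_self_eq_one hG] at hwA
  have hw_pos : 0 < ‖w‖ ^ 2 := pow_pos (norm_pos_iff.2 fun h => hw0 (by rw [h, map_zero])) 2
  exact le_of_mul_le_mul_right ((hWM w hw).trans hwA) hw_pos

theorem PosSemidef.sqrt_eigval_le_sqrt_eigval_transpose_mul_mul_add (hA : A.PosSemidef)
    {Gp : Matrix (Fin p) (Fin (p - K)) ℝ} (hG : Gᵀ * G = 1) (hGp : Gpᵀ * Gp = 1)
    (hGGp : Gᵀ * Gp = 0) (hK : K ≤ p) (k : Fin K) :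
    √(eigval A (Fin.castLE hK k)) ≤ √(eigval (Gᵀ * A * G) k) + √(sNorm (Gpᵀ * A * Gp)) := by
  set μ := eigval (Gᵀ * A * G) k
  set ε := sNorm (Gpᵀ * A * Gp)
  obtain ⟨W, hW, hWM⟩ :=
    (hA.isHermitian.transpose_mul_mul G).exists_sub_le_finrank_forall_inner_le_eigval_mul k
  have hrank := finrank_map_toEuclideanLin_sup_range hG hGp hGGp W
  obtain ⟨x, hx, hx0, hAx⟩ := hA.isHermitian.exists_mem_ne_zero_eigval_mul_le_inner
    (Fin.castLE hK k) (W.map (toEuclideanLin G) ⊔ LinearMap.range (toEuclideanLin Gp))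
    (by simp only [hrank, Fin.val_castLE, Fintype.card_fin]; omega)
  obtain ⟨_, ⟨w, hw, rfl⟩, _, ⟨z, rfl⟩, rfl⟩ := mem_sup.1 hx
  have hnorm : ‖toEuclideanLin G w + toEuclideanLin Gp z‖ ^ 2 = ‖w‖ ^ 2 + ‖z‖ ^ 2 := by
    rw [norm_add_sq_real, inner_toEuclideanLin_eq_zero_of_transpose_mul_eq_zero hGGp w z,
      mul_zero, add_zero, norm_toEuclideanLin_of_transpose_mul_self_eq_one hG,
      norm_toEuclideanLin_of_transpose_mul_self_eq_one hGp]
  set x := toEuclideanLin G w + toEuclideanLin Gp z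
  have hwx : ‖w‖ ≤ ‖x‖ := (sq_le_sq₀ (norm_nonneg _) (norm_nonneg _)).1 (by nlinarith)
  have hzx : ‖z‖ ≤ ‖x‖ := (sq_le_sq₀ (norm_nonneg _) (norm_nonneg _)).1 (by nlinarith)
  refine le_of_mul_le_mul_right ?_ (norm_pos_iff.2 hx0)
  calc √(eigval A (Fin.castLE hK k)) * ‖x‖
      = √(eigval A (Fin.castLE hK k) * ‖x‖ ^ 2) := (sqrt_mul_norm_sq _ _).symm
    _ ≤ √⟪x, toEuclideanLin A x⟫ := Real.sqrt_le_sqrt hAx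
    _ ≤ √⟪w, toEuclideanLin (Gᵀ * A * G) w⟫ + √⟪z, toEuclideanLin (Gpᵀ * A * Gp) z⟫ := by
      simpa only [inner_toEuclideanLin_transpose_mul_mul] using
        hA.sqrt_inner_toEuclideanLin_add_le _ _
    _ ≤ √(μ * ‖w‖ ^ 2) + √(ε * ‖z‖ ^ 2) := by
      gcongr
      · exact hWM w hw
      · exact inner_toEuclideanLin_self_le_sNorm_mul _ z
    _ ≤ (√μ + √ε) * ‖x‖ := by
      rw [sqrt_mul_norm_sq, sqrt_mul_norm_sq, add_mul]
      gcongr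

end Matrix

/-- Appendix Lemma B.1 (square-root eigenvalue comparison with a compression). -/
theorem statement9 {p K : ℕ} (hK : K ≤ p)
    (Sig : Matrix (Fin p) (Fin p) ℝ) (hSig : Sig.PosDef)
    (G : Matrix (Fin p) (Fin K) ℝ) (Gp : Matrix (Fin p) (Fin (p - K)) ℝ)
    (horth : (Matrix.fromCols G Gp)ᵀ * Matrix.fromCols G Gp = 1)
    (k : Fin K) :
    |Real.sqrt (eigval Sig (Fin.castLE hK k)) - Real.sqrt (eigval (Gᵀ * Sig * G) k)| ≤
      Real.sqrt (sNorm (Gpᵀ * Sig * Gp)) := by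
  rw [transpose_fromCols, fromRows_mul_fromCols, ← fromBlocks_one] at horth
  obtain ⟨hG, hGGp, -, hGp⟩ := fromBlocks_inj.mp horth
  have hcompress := Real.sqrt_le_sqrt (hSig.isHermitian.eigval_transpose_mul_mul_le hG hK k)
  have hperturb :=
    hSig.posSemidef.sqrt_eigval_le_sqrt_eigval_transpose_mul_mul_add hG hGp hGGp hK k
  rw [abs_sub_le_iff]
  constructor <;> linarith [Real.sqrt_nonneg (sNorm (Gpᵀ * Sig * Gp))]
end

section
/- Let λ_{0,k}, λ_{0,l}, λ_k be positive real numbers and c > 1 a constant with max{ λ_{0,k}/λ_{0,l}, λ_{0,l}/λ_{0,k} } > c. Set δ(c) = min{ (1 − 1/c)/4, (1 − 1/c)/(2(2 − 1/c)), 1/2 }. If |λ_k/λ_{0,k} − 1| ≤ δ(c), then | λ_k/λ_{0,l} − 1 | ≥ (1 − 1/c)/2 and √(λ_k λ_{0,l}) / |λ_k − λ_{0,l}| ≤ (2√2 / (1 − 1/c)) · min{ √(λ_{0,l}/λ_{0,k}), √(λ_{0,k}/λ_{0,l}) }. -/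
/-!
If `λ_k` is within `(1 - 1/c)/4` of `λ_{0,k}` in relative terms and the two reference eigenvalues
differ by a factor larger than `c`, then `|λ_k - λ_{0,l}| ≥ (3/4)(1 - 1/c) max(λ_{0,k}, λ_{0,l})`.
Both bounds follow from this gap, together with `λ_k ≤ 2 λ_{0,k}` and
`√(λ_{0,k} λ_{0,l}) / max(λ_{0,k}, λ_{0,l}) = min(√(λ_{0,l}/λ_{0,k}), √(λ_{0,k}/λ_{0,l}))`.
-/

open Real

lemma sqrt_mul_div_max {a b : ℝ} (ha : 0 < a) (hb : 0 < b) :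
    √(a * b) / max a b = min (√(b / a)) (√(a / b)) := by
  have sqrt_mul_div_right : ∀ {p q : ℝ}, 0 < q → √(p * q) / q = √(p / q) := fun {p q} hq => by
    rw [sqrt_div' _ hq.le, eq_div_iff (sqrt_pos.mpr hq).ne', div_mul_eq_mul_div,
      sqrt_mul' _ hq.le, mul_assoc, mul_self_sqrt hq.le, mul_div_assoc, div_self hq.ne', mul_one]
  rcases le_total a b with hab | hba
  · have hle : a / b ≤ b / a := by rw [div_le_div_iff₀ hb ha]; nlinarith
    rw [max_eq_right hab, min_eq_right (sqrt_le_sqrt hle), sqrt_mul_div_right hb]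
  · have hle : b / a ≤ a / b := by rw [div_le_div_iff₀ ha hb]; nlinarith
    rw [max_eq_left hba, min_eq_left (sqrt_le_sqrt hle), mul_comm, sqrt_mul_div_right ha]

lemma mul_max_le_abs_sub_of_separated {a b x c : ℝ} (ha : 0 < a) (hb : 0 < b) (hc : 1 < c)
    (hsep : c < max (a / b) (b / a)) (hx : |x / a - 1| ≤ (1 - 1 / c) / 4) :
    3 / 4 * (1 - 1 / c) * max a b ≤ |x - b| := by
  set u := 1 / c with hu
  have hu0 : 0 < u := by positivity
  have hu1 : u < 1 := by rw [hu, div_lt_one (by linarith)]; exact hc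
  have hx' : |x - a| ≤ (1 - u) / 4 * a := by
    rw [show x - a = (x / a - 1) * a by field_simp, abs_mul, abs_of_pos ha]
    gcongr
  obtain ⟨hx_lo, hx_hi⟩ := abs_le.mp hx'
  rcases lt_max_iff.mp hsep with hab | hba
  · have hb_lt : b < u * a := by
      rw [hu, one_div_mul_eq_div, lt_div_iff₀ (by linarith), mul_comm]
      exact (lt_div_iff₀ hb).mp hab
    rw [max_eq_left (by nlinarith)]
    calc 3 / 4 * (1 - u) * a ≤ x - b := by linarith
      _ ≤ |x - b| := le_abs_self _
  · have ha_lt : a < u * b := by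
      rw [hu, one_div_mul_eq_div, lt_div_iff₀ (by linarith), mul_comm]
      exact (lt_div_iff₀ ha).mp hba
    rw [max_eq_right (by nlinarith)]
    calc 3 / 4 * (1 - u) * b ≤ b - x := by nlinarith [mul_nonneg (sq_nonneg (1 - u)) hb.le]
      _ ≤ |x - b| := by rw [abs_sub_comm]; exact le_abs_self _

theorem statement13_general (lam0k lam0l lamk c : ℝ)
    (h0k : 0 < lam0k) (h0l : 0 < lam0l) (hc : 1 < c)
    (hsep : c < max (lam0k / lam0l) (lam0l / lam0k))
    (hclose : |lamk / lam0k - 1| ≤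
      min ((1 - 1 / c) / 4) (min ((1 - 1 / c) / (2 * (2 - 1 / c))) (1 / 2))) :
    (1 - 1 / c) / 2 ≤ |lamk / lam0l - 1| ∧
      Real.sqrt (lamk * lam0l) / |lamk - lam0l| ≤
        2 * Real.sqrt 2 / (1 - 1 / c) *
          min (Real.sqrt (lam0l / lam0k)) (Real.sqrt (lam0k / lam0l)) := by
  set e := 1 - 1 / c with he_def
  have he : 0 < e := by rw [he_def, sub_pos, div_lt_one (by linarith)]; exact hc
  have hgap := mul_max_le_abs_sub_of_separated h0k h0l hc hsep (hclose.trans (min_le_left _ _))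
  have hlamk : lamk ≤ 2 * lam0k := by
    have := (abs_le.mp (hclose.trans ((min_le_right _ _).trans (min_le_right _ _)))).2
    rw [sub_le_iff_le_add, div_le_iff₀ h0k] at this
    linarith
  constructor
  · calc e / 2 ≤ 3 / 4 * e * max lam0k lam0l / lam0l := by
          rw [le_div_iff₀ h0l]; nlinarith [le_max_right lam0k lam0l]
      _ ≤ |lamk - lam0l| / lam0l := by gcongr
      _ = |lamk / lam0l - 1| := by rw [div_sub_one h0l.ne', abs_div, abs_of_pos h0l]
  · calc √(lamk * lam0l) / |lamk - lam0l|
        ≤ √(2 * (lam0k * lam0l)) / (3 / 4 * e * max lam0k lam0l) :=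
          div_le_div₀ (sqrt_nonneg _) (sqrt_le_sqrt (by nlinarith)) (by positivity) hgap
      _ = 4 / 3 * (√2 / e) * (√(lam0k * lam0l) / max lam0k lam0l) := by
          rw [sqrt_mul zero_le_two]; field_simp
      _ = 4 / 3 * (√2 / e) * min (√(lam0l / lam0k)) (√(lam0k / lam0l)) := by
          rw [sqrt_mul_div_max h0k h0l]
      _ ≤ 2 * √2 / e * min (√(lam0l / lam0k)) (√(lam0k / lam0l)) := by
          gcongr ?_ * _
          rw [mul_div_assoc]
          gcongr
          norm_num

/-- Appendix Lemma D.3 (eigenvalue-ratio lemma for well-separated reference eigenvalues). -/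
theorem statement13 (lam0k lam0l lamk c : ℝ)
    (h0k : 0 < lam0k) (h0l : 0 < lam0l) (hk : 0 < lamk) (hc : 1 < c)
    (hsep : c < max (lam0k / lam0l) (lam0l / lam0k))
    (hclose : |lamk / lam0k - 1| ≤
      min ((1 - 1 / c) / 4) (min ((1 - 1 / c) / (2 * (2 - 1 / c))) (1 / 2))) :
    (1 - 1 / c) / 2 ≤ |lamk / lam0l - 1| ∧
      Real.sqrt (lamk * lam0l) / |lamk - lam0l| ≤
        2 * Real.sqrt 2 / (1 - 1 / c) *
          min (Real.sqrt (lam0l / lam0k)) (Real.sqrt (lam0k / lam0l)) :=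
  statement13_general lam0k lam0l lamk c h0k h0l hc hsep hclose
end
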